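/- arXiv:2107.05121 — 3 statements merged into one kernel-verified Lean document; each statement's English description precedes it below -/
import Mathlib

section
/- Two rescaled translated Walsh functions w_p and w_q (with p = p(j,k,l), q = p(j',k',l')) are orthogonal in L^2[0,1) if and only if the corresponding tiles p and q are disjoint subsets of the time-frequency plane. -/
open MeasureTheory

/-- The tile `p(j,k,l) = [2^{-j}k, 2^{-j}(k+1)) × [2^j l, 2^j(l+1))`. -/
def tile (j k l : ℕ) : Set (ℝ × ℝ) :=
  Set.Ico ((2:ℝ) ^ (-(j:ℤ)) * k) ((2:ℝ) ^ (-(j:ℤ)) * (k + 1)) ×ˢ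
  Set.Ico ((2:ℝ) ^ (j:ℤ) * l) ((2:ℝ) ^ (j:ℤ) * (l + 1))

noncomputable def walsh : ℕ → ℝ → ℝ
  | 0, t => if 0 ≤ t ∧ t < 1 then 1 else 0
  | n+1, t =>
      if (n+1) % 2 = 0 then
        walsh ((n+1)/2) (2*t) + (-1:ℝ)^((n+1)/2) * walsh ((n+1)/2) (2*t-1)
      else
        walsh ((n+1)/2) (2*t) - (-1:ℝ)^((n+1)/2) * walsh ((n+1)/2) (2*t-1)
  decreasing_by all_goals exact Nat.div_lt_self (Nat.succ_pos n) one_lt_two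

lemma walsh_zero (t : ℝ) : walsh 0 t = if 0 ≤ t ∧ t < 1 then 1 else 0 := by
  rw [walsh]

lemma walsh_support (l : ℕ) : ∀ t : ℝ, (t < 0 ∨ 1 ≤ t) → walsh l t = 0 := by
  induction l using Nat.strong_induction_on with
  | _ l ih =>
    intro t ht
    match l with
    | 0 =>
      rw [walsh_zero, if_neg]
      rcases ht with h | h
      · rintro ⟨h0, _⟩; linarith
      · rintro ⟨_, h1⟩; linarith
    | n+1 =>
      have hd : (n+1)/2 < n+1 := Nat.div_lt_self (Nat.succ_pos n) one_lt_two
      have h1 : walsh ((n+1)/2) (2*t) = 0 := by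
        apply ih _ hd
        rcases ht with h | h
        · left; linarith
        · right; linarith
      have h2 : walsh ((n+1)/2) (2*t-1) = 0 := by
        apply ih _ hd
        rcases ht with h | h
        · left; linarith
        · right; linarith
      rw [walsh]
      split <;> simp [h1, h2]

lemma walsh_odd (a : ℕ) (t : ℝ) :
    walsh (2*a+1) t = walsh a (2*t) - (-1:ℝ)^a * walsh a (2*t-1) := by
  have h2 : (2*a+1) % 2 = 1 := by omega
  have h3 : (2*a+1) / 2 = a := by omega
  conv_lhs => rw [show 2*a+1 = (2*a)+1 from rfl, walsh]
  simp [h2, h3]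

lemma walsh_even (a : ℕ) (t : ℝ) :
    walsh (2*a) t = walsh a (2*t) + (-1:ℝ)^a * walsh a (2*t-1) := by
  match a with
  | 0 =>
    simp only [Nat.mul_zero, pow_zero, one_mul, walsh_zero]
    by_cases h : 0 ≤ t ∧ t < 1
    · rcases lt_or_ge t (1/2) with h' | h'
      · rw [if_pos h, if_pos ⟨by linarith [h.1], by linarith⟩, if_neg (by rintro ⟨a, b⟩; linarith [h.1])]
        ring
      · rw [if_pos h, if_neg (by rintro ⟨a, b⟩; linarith [h.2]), if_pos ⟨by linarith, by linarith [h.2]⟩]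
        ring
    · push_neg at h
      rcases lt_or_ge t 0 with h0 | h0
      · rw [if_neg (by rintro ⟨a, b⟩; linarith), if_neg (by rintro ⟨a, b⟩; linarith),
          if_neg (by rintro ⟨a, b⟩; linarith)]
        ring
      · have h1 := h h0
        rw [if_neg (by rintro ⟨a, b⟩; linarith), if_neg (by rintro ⟨a, b⟩; linarith),
          if_neg (by rintro ⟨a, b⟩; linarith)]
        ring
  | a+1 =>
    have h2 : (2*(a+1)) % 2 = 0 := by omega
    have h3 : (2*(a+1)) / 2 = a+1 := by omega
    conv_lhs => rw [show 2*(a+1) = (2*a+1)+1 from rfl, walsh]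
    rw [show (2*a+1)+1 = 2*(a+1) from rfl, h3]
    simp [h2]

/-- the combined "one-step" identity with l/2 and sign -/
lemma walsh_step (l : ℕ) (t : ℝ) :
    walsh l t = walsh (l/2) (2*t) + (-1:ℝ)^(l/2 + l % 2) * walsh (l/2) (2*t-1) := by
  rcases Nat.even_or_odd l with ⟨a, ha⟩ | ⟨a, ha⟩
  · subst ha
    have : (a+a) = 2*a := by ring
    rw [this]
    have h1 : 2*a/2 = a := by omega
    have h2 : 2*a % 2 = 0 := by omega
    rw [h1, h2, Nat.add_zero, walsh_even]
  · subst ha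
    have h1 : (2*a+1)/2 = a := by omega
    have h2 : (2*a+1) % 2 = 1 := by omega
    rw [h1, h2, walsh_odd, pow_succ]
    ring

lemma walsh_abs_le (l : ℕ) : ∀ t : ℝ, |walsh l t| ≤ 1 := by
  induction l using Nat.strong_induction_on with
  | _ l ih =>
    intro t
    match l with
    | 0 =>
      rw [walsh_zero]
      split <;> simp
    | n+1 =>
      have hd : (n+1)/2 < n+1 := Nat.div_lt_self (Nat.succ_pos n) one_lt_two
      rw [walsh_step]
      rcases lt_or_ge t (1/2) with h | h
      · rw [walsh_support _ (2*t-1) (Or.inl (by linarith))]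
        simpa using ih _ hd (2*t)
      · rw [walsh_support _ (2*t) (Or.inr (by linarith))]
        have := ih _ hd (2*t-1)
        calc |0 + (-1:ℝ)^((n+1)/2 + (n+1)%2) * walsh ((n+1)/2) (2*t-1)| =
              |walsh ((n+1)/2) (2*t-1)| := by
                rw [zero_add, abs_mul, abs_pow, abs_neg, abs_one, one_pow, one_mul]
          _ ≤ 1 := this

lemma walsh_measurable (l : ℕ) : Measurable (walsh l) := by
  induction l using Nat.strong_induction_on with
  | _ l ih =>
    match l with
    | 0 =>
      have hw : walsh 0 = fun t => if 0 ≤ t ∧ t < 1 then (1:ℝ) else 0 := funext walsh_zero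
      rw [hw]
      have : MeasurableSet {t : ℝ | 0 ≤ t ∧ t < 1} := by
        have : {t : ℝ | 0 ≤ t ∧ t < 1} = Set.Ico 0 1 := rfl
        rw [this]; exact measurableSet_Ico
      exact Measurable.ite this measurable_const measurable_const
    | n+1 =>
      have hd : (n+1)/2 < n+1 := Nat.div_lt_self (Nat.succ_pos n) one_lt_two
      have h1 : Measurable (fun t : ℝ => walsh ((n+1)/2) (2*t)) :=
        (ih _ hd).comp (measurable_const_mul 2)
      have h2 : Measurable (fun t : ℝ => walsh ((n+1)/2) (2*t-1)) :=
        (ih _ hd).comp ((measurable_const_mul 2).sub measurable_const)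
      have : walsh (n+1) = fun t => walsh ((n+1)/2) (2*t) +
          (-1:ℝ)^((n+1)/2 + (n+1)%2) * walsh ((n+1)/2) (2*t-1) := by
        funext t; exact walsh_step (n+1) t
      rw [this]
      exact h1.add (measurable_const.mul h2)

lemma ae_ne (c : ℝ) : ∀ᵐ x : ℝ, x ≠ c := by
  rw [MeasureTheory.ae_iff]
  simp only [ne_eq, not_not, Set.setOf_eq_eq_singleton]
  exact Real.volume_singleton

lemma walsh_mul_intervalIntegrable (l m : ℕ) (c₁ d₁ c₂ d₂ a b : ℝ) :
    IntervalIntegrable (fun t => walsh l (c₁*t+d₁) * walsh m (c₂*t+d₂)) volume a b := by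
  rw [intervalIntegrable_iff]
  apply MeasureTheory.Integrable.mono' (g := fun _ => (1:ℝ))
  · exact integrableOn_const measure_Ioc_lt_top.ne
  · exact (((walsh_measurable l).comp ((measurable_const_mul c₁).add_const d₁)).mul
      ((walsh_measurable m).comp ((measurable_const_mul c₂).add_const d₂))).aestronglyMeasurable
  · filter_upwards with x
    rw [Real.norm_eq_abs, abs_mul]
    exact mul_le_one₀ (walsh_abs_le _ _) (abs_nonneg _) (walsh_abs_le _ _)

lemma walsh_ortho_aux : ∀ n l m : ℕ, l + m = n →
    (∫ t in (0:ℝ)..1, walsh l t * walsh m t) = if l = m then 1 else 0 := by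
  intro n
  induction n using Nat.strong_induction_on with
  | _ n ih =>
    intro l m hlm
    match n, hlm with
    | 0, hlm =>
      have hl : l = 0 := by omega
      have hm : m = 0 := by omega
      subst hl; subst hm
      rw [if_pos rfl]
      have h1 : (∫ t in (0:ℝ)..1, walsh 0 t * walsh 0 t) = ∫ t in (0:ℝ)..1, (1:ℝ) := by
        apply intervalIntegral.integral_congr_ae
        filter_upwards [ae_ne (1:ℝ)] with x hx hx'
        rw [Set.uIoc_of_le (by norm_num : (0:ℝ) ≤ 1)] at hx'
        rw [walsh_zero, if_pos ⟨le_of_lt hx'.1, lt_of_le_of_ne hx'.2 hx⟩]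
        norm_num
      rw [h1]; simp
    | (n'+1), hlm =>
      set a := l / 2 with ha
      set c := m / 2 with hc
      have hac : a + c < n' + 1 := by omega
      have hint1 : IntervalIntegrable (fun t => walsh l t * walsh m t) volume 0 (1/2) := by
        simpa using walsh_mul_intervalIntegrable l m 1 0 1 0 0 (1/2)
      have hint2 : IntervalIntegrable (fun t => walsh l t * walsh m t) volume (1/2) 1 := by
        simpa using walsh_mul_intervalIntegrable l m 1 0 1 0 (1/2) 1
      have hsplit := intervalIntegral.integral_add_adjacent_intervals hint1 hint2
      -- left piece
      have hleft : (∫ t in (0:ℝ)..(1/2), walsh l t * walsh m t)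
          = ∫ t in (0:ℝ)..(1/2), walsh a (2*t) * walsh c (2*t) := by
        apply intervalIntegral.integral_congr_ae
        filter_upwards [ae_ne ((1:ℝ)/2)] with x hx hx'
        rw [Set.uIoc_of_le (by norm_num : (0:ℝ) ≤ 1/2)] at hx'
        have hx2 : x < 1/2 := lt_of_le_of_ne hx'.2 hx
        rw [walsh_step l, walsh_step m,
          walsh_support _ (2*x-1) (Or.inl (by linarith)),
          walsh_support _ (2*x-1) (Or.inl (by linarith))]
        ring
      have hleft2 : (∫ t in (0:ℝ)..(1/2), walsh a (2*t) * walsh c (2*t))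
          = 2⁻¹ * ∫ u in (0:ℝ)..1, walsh a u * walsh c u := by
        have := intervalIntegral.integral_comp_mul_left
          (fun u => walsh a u * walsh c u) (two_ne_zero (α := ℝ)) (a := 0) (b := 1/2)
        norm_num at this
        rw [this]
        norm_num
      -- right piece
      set σ : ℝ := (-1:ℝ)^(a + l % 2 + (c + m % 2)) with hσ
      have hright : (∫ t in (1/2:ℝ)..1, walsh l t * walsh m t)
          = ∫ t in (1/2:ℝ)..1, σ * (walsh a (2*t-1) * walsh c (2*t-1)) := by
        apply intervalIntegral.integral_congr
        intro x hx'
        rw [Set.uIcc_of_le (by norm_num : (1:ℝ)/2 ≤ 1)] at hx'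
        have hx2 : (1:ℝ) ≤ 2*x := by
          have := hx'.1; linarith
        show walsh l x * walsh m x = σ * (walsh a (2*x-1) * walsh c (2*x-1))
        rw [walsh_step l, walsh_step m,
          walsh_support _ (2*x) (Or.inr hx2),
          walsh_support _ (2*x) (Or.inr hx2), hσ, pow_add]
        ring
      have hright2 : (∫ t in (1/2:ℝ)..1, walsh a (2*t-1) * walsh c (2*t-1))
          = 2⁻¹ * ∫ u in (0:ℝ)..1, walsh a u * walsh c u := by
        have := intervalIntegral.integral_comp_mul_sub
          (fun u => walsh a u * walsh c u) (two_ne_zero (α := ℝ)) (d := 1) (a := 1/2) (b := 1)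
        norm_num at this
        rw [this]
        norm_num
      have hJ : (∫ u in (0:ℝ)..1, walsh a u * walsh c u) = if a = c then 1 else 0 :=
        ih (a + c) hac a c rfl
      rw [← hsplit, hleft, hleft2, hright, intervalIntegral.integral_const_mul, hright2, hJ]
      by_cases hlm' : l = m
      · subst hlm'
        rw [if_pos rfl, if_pos rfl, hσ]
        have : (-1:ℝ)^(a + l % 2 + (a + l % 2)) = 1 := by
          rw [← two_mul, pow_mul]
          norm_num
        rw [this]
        norm_num
      · rw [if_neg hlm']
        by_cases hac' : a = c
        · have hbd : l % 2 ≠ m % 2 := by omega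
          have : σ = -1 := by
            rw [hσ, hac']
            have h2 : c + l % 2 + (c + m % 2) = 2*c + 1 := by omega
            rw [h2, pow_succ, pow_mul]
            norm_num
          rw [if_pos hac', this]
          ring
        · rw [if_neg hac']
          ring

lemma walsh_restrict : ∀ i r l : ℕ, r < 2^i → ∃ ε : ℝ, (ε = 1 ∨ ε = -1) ∧
    ∀ u : ℝ, 0 ≤ u → u < 1 → walsh l ((u + r) / 2^i) = ε * walsh (l / 2^i) u := by
  intro i
  induction i with
  | zero =>
    intro r l hr
    have hr0 : r = 0 := by omega
    subst hr0
    exact ⟨1, Or.inl rfl, fun u _ _ => by norm_num⟩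
  | succ i ih =>
    intro r l hr
    have h2i : (0:ℝ) < 2^i := by positivity
    have hdiv : l / 2 / 2^i = l / 2^(i+1) := by
      rw [Nat.div_div_eq_div_mul]
      congr 1
      rw [pow_succ]; ring
    by_cases hri : r < 2^i
    · obtain ⟨ε, hε, h⟩ := ih r (l/2) hri
      refine ⟨ε, hε, fun u hu0 hu1 => ?_⟩
      have harg : 2 * ((u + (r:ℝ)) / 2^(i+1)) = (u + r)/2^i := by
        rw [pow_succ]; field_simp
      rw [walsh_step l, harg]
      have hlt : (u + (r:ℝ))/2^i - 1 < 0 := by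
        have h1 : (u + (r:ℝ))/2^i < 1 := by
          rw [div_lt_one h2i]
          have : (r:ℝ) ≤ 2^i - 1 := by
            have : (r:ℝ) + 1 ≤ 2^i := by
              have : ((r+1 : ℕ):ℝ) ≤ ((2^i : ℕ):ℝ) := by exact_mod_cast Nat.cast_le.mpr hri
              push_cast at this; linarith
            linarith
          linarith
        linarith
      rw [walsh_support _ _ (Or.inl hlt), h u hu0 hu1, hdiv]
      ring
    · have hp : 2^(i+1) = 2*2^i := by rw [pow_succ]; ring
      have hri' : r - 2^i < 2^i := by omega
      obtain ⟨ε, hε, h⟩ := ih (r - 2^i) (l/2) hri'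
      have hsgn : ((-1:ℝ)^(l/2 + l % 2) = 1 ∨ (-1:ℝ)^(l/2 + l % 2) = -1) := by
        rcases Nat.even_or_odd (l/2 + l % 2) with he | ho
        · exact Or.inl he.neg_one_pow
        · exact Or.inr ho.neg_one_pow
      refine ⟨(-1:ℝ)^(l/2 + l % 2) * ε, ?_, fun u hu0 hu1 => ?_⟩
      · rcases hsgn with h1 | h1 <;> rcases hε with h2 | h2 <;>
          rw [h1, h2] <;> norm_num
      · have hrr : (r:ℝ) = ((r - 2^i : ℕ):ℝ) + 2^i := by
          have : ((r - 2^i : ℕ) + 2^i : ℕ) = r := by omega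
          calc (r:ℝ) = (((r - 2^i : ℕ) + 2^i : ℕ) : ℝ) := by rw [this]
            _ = ((r - 2^i : ℕ):ℝ) + 2^i := by push_cast; ring
        have harg : 2 * ((u + (r:ℝ)) / 2^(i+1)) = (u + r)/2^i := by
          rw [pow_succ]; field_simp
        rw [walsh_step l, harg]
        have hge : (1:ℝ) ≤ (u + (r:ℝ))/2^i := by
          rw [le_div_iff₀ h2i]
          have : ((2^i : ℕ):ℝ) ≤ (r:ℝ) := Nat.cast_le.mpr (le_of_not_gt hri)
          push_cast at this
          linarith
        rw [walsh_support _ _ (Or.inr hge)]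
        have harg2 : (u + (r:ℝ))/2^i - 1 = (u + ((r - 2^i : ℕ):ℝ))/2^i := by
          rw [hrr]; field_simp; ring
        rw [harg2, h u hu0 hu1, hdiv]
        ring

lemma nat_div_ne_iff (P k k' : ℕ) (hP : 0 < P) :
    k'/P ≠ k ↔ (P*(k+1) ≤ k' ∨ k'+1 ≤ P*k) := by
  have hmod := Nat.div_add_mod k' P
  have hlt := Nat.mod_lt k' hP
  rcases Nat.lt_trichotomy (k'/P) k with h | h | h
  · constructor
    · intro _
      right
      have : k'/P + 1 ≤ k := h
      have h2 : P * (k'/P + 1) ≤ P * k := Nat.mul_le_mul_left P this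
      rw [Nat.mul_succ] at h2
      omega
    · intro _; omega
  · constructor
    · intro hne; exact absurd h hne
    · rintro (h1 | h1)
      · rw [← h, Nat.mul_succ] at h1
        omega
      · rw [← h] at h1
        omega
  · constructor
    · intro _
      left
      have : k + 1 ≤ k'/P := h
      have h2 : P * (k+1) ≤ P * (k'/P) := Nat.mul_le_mul_left P this
      omega
    · intro _; omega

lemma Ico_nat_disjoint (c : ℝ) (hc : 0 < c) (a b a' b' : ℕ) (hab : a < b) (hab' : a' < b') :
    Disjoint (Set.Ico (c*a) (c*b)) (Set.Ico (c*(a':ℝ)) (c*b')) ↔ (b ≤ a' ∨ b' ≤ a) := by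
  constructor
  · intro hd
    by_contra hcon
    push_neg at hcon
    have h1 : a' < b := hcon.1
    have h2 : a < b' := hcon.2
    have hmem : c * (max a a' : ℕ) ∈ Set.Ico (c*(a:ℝ)) (c*b) ∩ Set.Ico (c*(a':ℝ)) (c*b') := by
      constructor <;> constructor
      · exact mul_le_mul_of_nonneg_left (Nat.cast_le.mpr (le_max_left a a')) hc.le
      · exact (mul_lt_mul_iff_right₀ hc).mpr (Nat.cast_lt.mpr (by omega))
      · exact mul_le_mul_of_nonneg_left (Nat.cast_le.mpr (le_max_right a a')) hc.le
      · exact (mul_lt_mul_iff_right₀ hc).mpr (Nat.cast_lt.mpr (by omega))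
    exact Set.not_disjoint_iff.mpr ⟨_, hmem.1, hmem.2⟩ hd
  · intro h
    rw [Set.disjoint_left]
    rintro x ⟨hx1, hx2⟩ ⟨hx3, hx4⟩
    rcases h with h | h
    · have : c * (b:ℝ) ≤ c * a' := mul_le_mul_of_nonneg_left (Nat.cast_le.mpr h) hc.le
      linarith
    · have : c * (b':ℝ) ≤ c * a := mul_le_mul_of_nonneg_left (Nat.cast_le.mpr h) hc.le
      linarith

lemma time_disjoint (j i k k' : ℕ) :
    Disjoint (Set.Ico ((2:ℝ)^(-(j:ℤ))*k) ((2:ℝ)^(-(j:ℤ))*(k+1)))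
      (Set.Ico ((2:ℝ)^(-((j+i:ℕ):ℤ))*k') ((2:ℝ)^(-((j+i:ℕ):ℤ))*(k'+1))) ↔ k' / 2^i ≠ k := by
  have hc : (0:ℝ) < (2:ℝ)^(-((j+i:ℕ):ℤ)) := by positivity
  have hA : (2:ℝ)^(-(j:ℤ)) = (2:ℝ)^(-((j+i:ℕ):ℤ)) * ((2^i : ℕ):ℝ) := by
    push_cast
    rw [← zpow_natCast (2:ℝ) i, ← zpow_add₀ (two_ne_zero)]
    congr 1; push_cast; ring
  have e1 : (2:ℝ)^(-(j:ℤ)) * k = (2:ℝ)^(-((j+i:ℕ):ℤ)) * ((2^i * k : ℕ):ℝ) := by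
    rw [hA]; push_cast; ring
  have e2 : (2:ℝ)^(-(j:ℤ)) * ((k:ℝ)+1) = (2:ℝ)^(-((j+i:ℕ):ℤ)) * ((2^i * (k+1) : ℕ):ℝ) := by
    rw [hA]; push_cast; ring
  have e4 : (2:ℝ)^(-((j+i:ℕ):ℤ)) * ((k':ℝ)+1) = (2:ℝ)^(-((j+i:ℕ):ℤ)) * (((k'+1:ℕ)):ℝ) := by
    push_cast; ring
  rw [e1, e2, e4]
  rw [Ico_nat_disjoint _ hc _ _ _ _
    (mul_lt_mul_of_pos_left (by omega) (Nat.two_pow_pos i)) (by omega)]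
  rw [nat_div_ne_iff _ _ _ (Nat.two_pow_pos i)]

lemma freq_disjoint (j i l l' : ℕ) :
    Disjoint (Set.Ico ((2:ℝ)^(j:ℤ)*l) ((2:ℝ)^(j:ℤ)*(l+1)))
      (Set.Ico ((2:ℝ)^((j+i:ℕ):ℤ)*l') ((2:ℝ)^((j+i:ℕ):ℤ)*(l'+1))) ↔ l / 2^i ≠ l' := by
  have hc : (0:ℝ) < (2:ℝ)^(j:ℤ) := by positivity
  have hA : (2:ℝ)^((j+i:ℕ):ℤ) = (2:ℝ)^(j:ℤ) * ((2^i : ℕ):ℝ) := by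
    push_cast
    rw [← zpow_natCast (2:ℝ) i, ← zpow_add₀ (two_ne_zero)]
  have e1 : (2:ℝ)^((j+i:ℕ):ℤ) * l' = (2:ℝ)^(j:ℤ) * ((2^i * l' : ℕ):ℝ) := by
    rw [hA]; push_cast; ring
  have e2 : (2:ℝ)^((j+i:ℕ):ℤ) * ((l':ℝ)+1) = (2:ℝ)^(j:ℤ) * ((2^i * (l'+1) : ℕ):ℝ) := by
    rw [hA]; push_cast; ring
  have e4 : (2:ℝ)^(j:ℤ) * ((l:ℝ)+1) = (2:ℝ)^(j:ℤ) * (((l+1:ℕ)):ℝ) := by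
    push_cast; ring
  rw [e1, e2, e4]
  rw [Ico_nat_disjoint _ hc _ _ _ _ (by omega)
    (mul_lt_mul_of_pos_left (by omega) (Nat.two_pow_pos i))]
  rw [nat_div_ne_iff _ _ _ (Nat.two_pow_pos i)]
  exact or_comm


lemma main_le (j i k l k' l' : ℕ) (hk : k < 2^j) (hk' : k' < 2^(j+i)) :
    (∫ t in (0:ℝ)..1,
        (Real.sqrt ((2:ℝ) ^ j) * walsh l ((2:ℝ) ^ j * t - k)) *
        (Real.sqrt ((2:ℝ) ^ (j+i)) * walsh l' ((2:ℝ) ^ (j+i) * t - k'))) = 0 ↔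
      Disjoint (tile j k l) (tile (j+i) k' l') := by
  have h2j : (0:ℝ) < (2:ℝ)^j := by positivity
  have h2j' : (0:ℝ) < (2:ℝ)^(j+i) := by positivity
  have h2i : (0:ℝ) < (2:ℝ)^i := by positivity
  have hC : (0:ℝ) < Real.sqrt ((2:ℝ)^j) * Real.sqrt ((2:ℝ)^(j+i)) := by
    apply mul_pos <;> exact Real.sqrt_pos.mpr (by positivity)
  have hk1' : (k':ℝ) + 1 ≤ (2:ℝ)^(j+i) := by
    have : ((k'+1:ℕ):ℝ) ≤ ((2^(j+i):ℕ):ℝ) := Nat.cast_le.mpr hk'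
    push_cast at this
    linarith
  -- pull out constants
  have hsplit1 : (∫ t in (0:ℝ)..1,
        (Real.sqrt ((2:ℝ) ^ j) * walsh l ((2:ℝ) ^ j * t - k)) *
        (Real.sqrt ((2:ℝ) ^ (j+i)) * walsh l' ((2:ℝ) ^ (j+i) * t - k')))
      = (Real.sqrt ((2:ℝ)^j) * Real.sqrt ((2:ℝ)^(j+i))) *
        ∫ t in (0:ℝ)..1, walsh l ((2:ℝ)^j*t - k) * walsh l' ((2:ℝ)^(j+i)*t - k') := by
    rw [← intervalIntegral.integral_const_mul]
    apply intervalIntegral.integral_congr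
    intro x _
    simp only
    ring
  -- substitution u = 2^(j+i) t - k'
  have harg : ∀ x:ℝ, (2:ℝ)^(j+i)*x/2^i - k = (2:ℝ)^j * x - k := by
    intro x
    rw [pow_add]
    field_simp
  have hsub : (∫ t in (0:ℝ)..1, walsh l ((2:ℝ)^j*t - k) * walsh l' ((2:ℝ)^(j+i)*t - k'))
      = ((2:ℝ)^(j+i))⁻¹ * ∫ u in (-(k':ℝ))..((2:ℝ)^(j+i) - k'),
          walsh l ((u + (k':ℝ))/2^i - k) * walsh l' u := by
    have hcomp := intervalIntegral.integral_comp_mul_sub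
      (fun u => walsh l ((u + (k':ℝ))/2^i - k) * walsh l' u) (ne_of_gt h2j') ((k':ℝ))
      (a := (0:ℝ)) (b := 1)
    norm_num at hcomp
    rw [← hcomp]
    apply intervalIntegral.integral_congr
    intro x _
    simp only
    rw [harg x]
  -- integrability of the new integrand
  have hint : ∀ a b : ℝ, IntervalIntegrable
      (fun u => walsh l ((u + (k':ℝ))/2^i - k) * walsh l' u) volume a b := by
    intro a b
    have hform : (fun u => walsh l ((u + (k':ℝ))/2^i - k) * walsh l' u)
        = fun u => walsh l (((2:ℝ)^i)⁻¹*u + ((k':ℝ)/2^i - k)) * walsh l' (1*u + 0) := by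
      funext u
      congr 1
      · congr 1
        field_simp
        ring
      · congr 1
        ring
    rw [hform]
    exact walsh_mul_intervalIntegrable l l' _ _ _ _ a b
  have hsplit2 := intervalIntegral.integral_add_adjacent_intervals
    (hint (-(k':ℝ)) 0) (hint 0 1)
  have hsplit3 := intervalIntegral.integral_add_adjacent_intervals
    (hint (-(k':ℝ)) 1) (hint 1 ((2:ℝ)^(j+i) - k'))
  have hJ1 : (∫ u in (-(k':ℝ))..0, walsh l ((u + (k':ℝ))/2^i - k) * walsh l' u) = 0 := by
    have h0 : (∫ u in (-(k':ℝ))..0, walsh l ((u + (k':ℝ))/2^i - k) * walsh l' u)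
        = ∫ u in (-(k':ℝ))..0, (0:ℝ) := by
      apply intervalIntegral.integral_congr_ae
      filter_upwards [ae_ne (0:ℝ)] with x hx hx'
      rw [Set.uIoc_of_le (neg_nonpos.mpr (Nat.cast_nonneg k'))] at hx'
      rw [walsh_support l' x (Or.inl (lt_of_le_of_ne hx'.2 hx))]
      ring
    rw [h0, intervalIntegral.integral_zero]
  have hJ3 : (∫ u in (1:ℝ)..((2:ℝ)^(j+i) - k'),
      walsh l ((u + (k':ℝ))/2^i - k) * walsh l' u) = 0 := by
    have h0 : (∫ u in (1:ℝ)..((2:ℝ)^(j+i) - k'), walsh l ((u + (k':ℝ))/2^i - k) * walsh l' u)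
        = ∫ u in (1:ℝ)..((2:ℝ)^(j+i) - k'), (0:ℝ) := by
      apply intervalIntegral.integral_congr
      intro x hx
      rw [Set.uIcc_of_le (by linarith : (1:ℝ) ≤ (2:ℝ)^(j+i) - k')] at hx
      simp only
      rw [walsh_support l' x (Or.inr hx.1)]
      ring
    rw [h0, intervalIntegral.integral_zero]
  by_cases hcase : k'/2^i = k
  · -- time intervals intersect
    have hmod := Nat.div_add_mod k' (2^i)
    rw [hcase] at hmod
    have hrlt : k' % 2^i < 2^i := Nat.mod_lt _ (Nat.two_pow_pos i)
    obtain ⟨ε, hε, hres⟩ := walsh_restrict i (k' % 2^i) l hrlt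
    have hcast : (k':ℝ) = 2^i * k + (k' % 2^i : ℕ) := by
      have h := congrArg (fun n : ℕ => (n:ℝ)) hmod
      push_cast at h
      linarith
    have hJ2 : (∫ u in (0:ℝ)..1, walsh l ((u + (k':ℝ))/2^i - k) * walsh l' u)
        = ε * (if l/2^i = l' then 1 else 0) := by
      have h1 : (∫ u in (0:ℝ)..1, walsh l ((u + (k':ℝ))/2^i - k) * walsh l' u)
          = ∫ u in (0:ℝ)..1, ε * (walsh (l/2^i) u * walsh l' u) := by
        apply intervalIntegral.integral_congr_ae
        filter_upwards [ae_ne (1:ℝ)] with x hx hx'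
        rw [Set.uIoc_of_le zero_le_one] at hx'
        have hx1 : x < 1 := lt_of_le_of_ne hx'.2 hx
        have hx0 : 0 ≤ x := le_of_lt hx'.1
        have hargr : (x + (k':ℝ))/2^i - k = (x + ((k' % 2^i : ℕ):ℝ))/2^i := by
          rw [hcast]
          field_simp
          ring
        rw [hargr, hres x hx0 hx1]
        ring
      rw [h1, intervalIntegral.integral_const_mul,
        walsh_ortho_aux (l/2^i + l') (l/2^i) l' rfl]
    have hRHS : (Disjoint (tile j k l) (tile (j+i) k' l')) ↔ l/2^i ≠ l' := by
      rw [tile, tile, Set.disjoint_prod, time_disjoint, freq_disjoint]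
      simp [hcase]
    rw [hsplit1, hsub, ← hsplit3, ← hsplit2, hJ1, hJ3, hJ2, hRHS]
    rcases hε with hε | hε <;> by_cases hll : l/2^i = l' <;>
      simp [hll, hε, hC.ne', h2j'.ne']
  · -- time intervals disjoint
    have hJ2 : (∫ u in (0:ℝ)..1, walsh l ((u + (k':ℝ))/2^i - k) * walsh l' u) = 0 := by
      have h0 : (∫ u in (0:ℝ)..1, walsh l ((u + (k':ℝ))/2^i - k) * walsh l' u)
          = ∫ u in (0:ℝ)..1, (0:ℝ) := by
        apply intervalIntegral.integral_congr_ae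
        filter_upwards [ae_ne (1:ℝ)] with x hx hx'
        rw [Set.uIoc_of_le zero_le_one] at hx'
        have hx1 : x < 1 := lt_of_le_of_ne hx'.2 hx
        have hx0 : 0 < x := hx'.1
        rcases (nat_div_ne_iff (2^i) k k' (Nat.two_pow_pos i)).mp hcase with hge | hle
        · have hcast : ((2:ℝ)^i * (k+1)) ≤ k' := by
            have : ((2^i*(k+1):ℕ):ℝ) ≤ (k':ℝ) := Nat.cast_le.mpr hge
            push_cast at this
            linarith
          rw [walsh_support l _ (Or.inr ?_)]
          · ring
          · rw [le_sub_iff_add_le, le_div_iff₀ h2i]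
            linarith
        · have hcast : (k':ℝ) + 1 ≤ (2:ℝ)^i * k := by
            have : ((k'+1:ℕ):ℝ) ≤ ((2^i*k:ℕ):ℝ) := Nat.cast_le.mpr hle
            push_cast at this
            linarith
          rw [walsh_support l _ (Or.inl ?_)]
          · ring
          · rw [sub_neg, div_lt_iff₀ h2i]
            linarith
      rw [h0, intervalIntegral.integral_zero]
    have hD : Disjoint (tile j k l) (tile (j+i) k' l') := by
      rw [tile, tile]
      exact Set.disjoint_prod.mpr (Or.inl ((time_disjoint j i k k').mpr hcase))
    rw [hsplit1, hsub, ← hsplit3, ← hsplit2, hJ1, hJ3, hJ2]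
    simp [hD]

/-- Two rescaled translated Walsh functions
`w_p(t) = 2^{j/2} W_l(2^j t - k)` and `w_q(t) = 2^{j'/2} W_{l'}(2^{j'} t - k')`
are orthogonal in `L²[0,1)` if and only if the corresponding tiles are disjoint. -/
theorem walsh_tile_orthogonality
    (W : ℕ → ℝ → ℝ)
    (hW0 : ∀ t : ℝ, W 0 t = if 0 ≤ t ∧ t < 1 then 1 else 0)
    (hWeven : ∀ (l : ℕ) (t : ℝ),
      W (2 * l) t = W l (2 * t) + (-1 : ℝ) ^ l * W l (2 * t - 1))
    (hWodd : ∀ (l : ℕ) (t : ℝ),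
      W (2 * l + 1) t = W l (2 * t) - (-1 : ℝ) ^ l * W l (2 * t - 1))
    (j k l j' k' l' : ℕ) (hk : k < 2 ^ j) (hk' : k' < 2 ^ j') :
    (∫ t in (0:ℝ)..1,
        (Real.sqrt ((2:ℝ) ^ j) * W l ((2:ℝ) ^ j * t - k)) *
        (Real.sqrt ((2:ℝ) ^ j') * W l' ((2:ℝ) ^ j' * t - k'))) = 0 ↔
      Disjoint (tile j k l) (tile j' k' l') := by
  have hWw : ∀ m : ℕ, ∀ t : ℝ, W m t = walsh m t := by
    intro m
    induction m using Nat.strong_induction_on with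
    | _ m ih =>
      intro t
      match m with
      | 0 => rw [hW0, walsh_zero]
      | n+1 =>
        rcases Nat.even_or_odd (n+1) with ⟨a, ha⟩ | ⟨a, ha⟩
        · have ha' : n+1 = 2*a := by omega
          have hal : a < n+1 := by omega
          rw [ha', hWeven, walsh_even, ih a hal, ih a hal]
        · have ha' : n+1 = 2*a+1 := by omega
          have hal : a < n+1 := by omega
          rw [ha', hWodd, walsh_odd, ih a hal, ih a hal]
  simp only [hWw]
  rcases le_total j j' with h | h
  · obtain ⟨i, rfl⟩ := Nat.exists_eq_add_of_le h
    exact main_le j i k l k' l' hk hk'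
  · obtain ⟨i, rfl⟩ := Nat.exists_eq_add_of_le h
    have hcomm : (∫ t in (0:ℝ)..1,
          (Real.sqrt ((2:ℝ) ^ (j'+i)) * walsh l ((2:ℝ) ^ (j'+i) * t - k)) *
          (Real.sqrt ((2:ℝ) ^ j') * walsh l' ((2:ℝ) ^ j' * t - k')))
        = ∫ t in (0:ℝ)..1,
          (Real.sqrt ((2:ℝ) ^ j') * walsh l' ((2:ℝ) ^ j' * t - k')) *
          (Real.sqrt ((2:ℝ) ^ (j'+i)) * walsh l ((2:ℝ) ^ (j'+i) * t - k)) := by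
      apply intervalIntegral.integral_congr
      intro x _
      simp only
      ring
    rw [hcomm, disjoint_comm]
    exact main_le j' i k' l' k l hk' hk
end

section
/- For a connected weighted graph G with Fiedler vector φ₁ (an eigenvector of the graph Laplacian corresponding to the smallest nonzero eigenvalue λ₁), the subgraph induced on V₁ = {i ∈ V : φ₁[i] ≥ 0} is connected. -/
open Matrix RealInnerProductSpace

private lemma fiedler_mulVec_apply {N : ℕ} (W : Matrix (Fin N) (Fin N) ℝ)
    (x : Fin N → ℝ) (i : Fin N) :
    ((Matrix.diagonal (fun i => ∑ j, W i j) - W) *ᵥ x) i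
      = ∑ j, (W i j * x i - W i j * x j) := by
  simp only [mulVec, dotProduct, Matrix.sub_apply, diagonal_apply, sub_mul, ite_mul, zero_mul]
  rw [Finset.sum_sub_distrib, Finset.sum_ite_eq (Finset.univ : Finset (Fin N)) i
    (fun j => (∑ k, W i k) * x j)]
  simp [Finset.sum_mul, Finset.sum_sub_distrib]

private lemma fiedler_closed {N : ℕ} (G : SimpleGraph (Fin N)) (T : Set (Fin N))
    (hT : ∀ i ∈ T, ∀ j, G.Adj i j → j ∈ T)
    {u v : Fin N} (h : G.Reachable u v) (hu : u ∈ T) : v ∈ T := by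
  obtain ⟨w⟩ := h
  induction w with
  | nil => exact hu
  | cons h p ih => exact ih (hT _ hu _ h)

private lemma fiedler_rowsum {N : ℕ} {W : Matrix (Fin N) (Fin N) ℝ} {φ : Fin N → ℝ} {lam : ℝ}
    (heig : (Matrix.diagonal (fun i => ∑ j, W i j) - W).mulVec φ = lam • φ) (i : Fin N) :
    ∑ j, (W i j * φ i - W i j * φ j) = lam * φ i := by
  rw [← fiedler_mulVec_apply W φ i, heig]
  simp

private lemma fiedler_sector {N : ℕ} {W : Matrix (Fin N) (Fin N) ℝ} {G : SimpleGraph (Fin N)}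
    (hsymm : ∀ i j, W i j = W j i) (hnonneg : ∀ i j, 0 ≤ W i j)
    (hAdj : ∀ i j, G.Adj i j ↔ i ≠ j ∧ 0 < W i j) (hconn : G.Connected)
    {φ : Fin N → ℝ} {lam : ℝ}
    (heig : (Matrix.diagonal (fun i => ∑ j, W i j) - W).mulVec φ = lam • φ)
    (T : Set (Fin N)) [DecidablePred (· ∈ T)]
    (hTS : ∀ i ∈ T, 0 ≤ φ i)
    (hTclosed : ∀ i ∈ T, ∀ j, G.Adj i j → 0 ≤ φ j → j ∈ T)
    (hTne : ∃ i, i ∈ T) (hNT : ∃ j, j ∉ T) :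
    (∃ i ∈ T, 0 < φ i)
    ∧ (∀ i ∈ T, ∀ j, W i j * (φ j - (if j ∈ T then φ j else 0)) ≤ 0)
    ∧ (∀ i ∈ T, ((Matrix.diagonal (fun i => ∑ j, W i j) - W) *ᵥ
          (fun k => if k ∈ T then φ k else 0)) i
        = lam * φ i + ∑ j, W i j * (φ j - (if j ∈ T then φ j else 0)))
    ∧ ((fun k => if k ∈ T then φ k else 0) ⬝ᵥ ((Matrix.diagonal (fun i => ∑ j, W i j) - W) *ᵥ
          (fun k => if k ∈ T then φ k else 0))
        ≤ lam * ∑ i, (if i ∈ T then φ i else 0) ^ 2) := by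
  have hout : ∀ i ∈ T, ∀ j, j ∉ T → W i j ≠ 0 → φ j < 0 := by
    intro i hi j hj hW
    by_contra h
    push_neg at h
    have hWpos : 0 < W i j := lt_of_le_of_ne (hnonneg i j) (Ne.symm hW)
    have hij : i ≠ j := fun h' => hj (h' ▸ hi)
    exact hj (hTclosed i hi j ((hAdj i j).2 ⟨hij, hWpos⟩) h)
  have hterm : ∀ i ∈ T, ∀ j, W i j * (φ j - (if j ∈ T then φ j else 0)) ≤ 0 := by
    intro i hi j
    by_cases hj : j ∈ T
    · simp [hj]
    · rw [if_neg hj, sub_zero]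
      rcases eq_or_ne (W i j) 0 with h | h
      · simp [h]
      · exact mul_nonpos_of_nonneg_of_nonpos (hnonneg i j) (le_of_lt (hout i hi j hj h))
  have hLx : ∀ i ∈ T, ((Matrix.diagonal (fun i => ∑ j, W i j) - W) *ᵥ
        (fun k => if k ∈ T then φ k else 0)) i
      = lam * φ i + ∑ j, W i j * (φ j - (if j ∈ T then φ j else 0)) := by
    intro i hi
    rw [fiedler_mulVec_apply, ← fiedler_rowsum heig i, ← Finset.sum_add_distrib]
    refine Finset.sum_congr rfl fun j _ => ?_
    simp only [if_pos hi]
    ring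
  refine ⟨?_, hterm, hLx, ?_⟩
  · by_contra h
    push_neg at h
    have hzero : ∀ i ∈ T, φ i = 0 := fun i hi => le_antisymm (h i hi) (hTS i hi)
    have hclosed : ∀ i ∈ T, ∀ j, G.Adj i j → j ∈ T := by
      intro i hi j hadj
      have h2 := fiedler_rowsum heig i
      rw [Finset.sum_sub_distrib, hzero i hi] at h2
      have h3 : ∑ k, W i k * φ k = 0 := by
        simp only [mul_zero, Finset.sum_const_zero, zero_sub, neg_eq_zero] at h2
        exact h2
      have hle : ∀ k ∈ Finset.univ, W i k * φ k ≤ 0 := by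
        intro k _
        by_cases hk : k ∈ T
        · rw [hzero k hk, mul_zero]
        · rcases eq_or_ne (W i k) 0 with h' | h'
          · simp [h']
          · exact mul_nonpos_of_nonneg_of_nonpos (hnonneg i k) (le_of_lt (hout i hi k hk h'))
      have heach := (Finset.sum_eq_zero_iff_of_nonpos hle).1 h3
      by_cases hj : j ∈ T
      · exact hj
      · exfalso
        have hWpos : 0 < W i j := ((hAdj i j).1 hadj).2
        have hφj : φ j < 0 := hout i hi j hj (ne_of_gt hWpos)
        have := heach j (Finset.mem_univ j)
        nlinarith
    obtain ⟨i0, hi0⟩ := hTne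
    obtain ⟨j0, hj0⟩ := hNT
    exact hj0 (fiedler_closed G T hclosed (hconn.preconnected i0 j0) hi0)
  · have hper : ∀ i ∈ Finset.univ, (if i ∈ T then φ i else 0) *
        ((Matrix.diagonal (fun i => ∑ j, W i j) - W) *ᵥ
          (fun k => if k ∈ T then φ k else 0)) i
        ≤ lam * (if i ∈ T then φ i else 0) ^ 2 := by
      intro i _
      by_cases hi : i ∈ T
      · rw [if_pos hi, hLx i hi]
        have hs : ∑ j, W i j * (φ j - (if j ∈ T then φ j else 0)) ≤ 0 :=
          Finset.sum_nonpos fun j _ => hterm i hi j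
        have hφ : 0 ≤ φ i := hTS i hi
        nlinarith
      · rw [if_neg hi]
        simp
    calc (fun k => if k ∈ T then φ k else 0) ⬝ᵥ _
        = ∑ i, (if i ∈ T then φ i else 0) *
          ((Matrix.diagonal (fun i => ∑ j, W i j) - W) *ᵥ
            (fun k => if k ∈ T then φ k else 0)) i := rfl
      _ ≤ ∑ i, lam * (if i ∈ T then φ i else 0) ^ 2 := Finset.sum_le_sum hper
      _ = lam * ∑ i, (if i ∈ T then φ i else 0) ^ 2 := by rw [Finset.mul_sum]

variable {N : ℕ}

private lemma fiedler_quad (W : Matrix (Fin N) (Fin N) ℝ) (hsymm : ∀ i j, W i j = W j i) (x : Fin N → ℝ) :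
    x ⬝ᵥ ((Matrix.diagonal (fun i => ∑ j, W i j) - W) *ᵥ x)
      = (∑ i, ∑ j, W i j * (x i - x j)^2) / 2 := by
  have swap : ∑ i, ∑ j, W i j * x j ^ 2 = ∑ i, ∑ j, W i j * x i ^ 2 := by
    rw [Finset.sum_comm]
    exact Finset.sum_congr rfl fun i _ => Finset.sum_congr rfl fun j _ => by rw [hsymm]
  have lhs : x ⬝ᵥ ((Matrix.diagonal (fun i => ∑ j, W i j) - W) *ᵥ x)
      = ∑ i, ∑ j, (W i j * x i ^ 2 - W i j * x i * x j) := by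
    simp only [dotProduct, fiedler_mulVec_apply, Finset.mul_sum]
    exact Finset.sum_congr rfl fun i _ => Finset.sum_congr rfl fun j _ => by ring
  rw [lhs, eq_div_iff (by norm_num : (2:ℝ) ≠ 0)]
  have : (∑ i, ∑ j, (W i j * x i ^ 2 - W i j * x i * x j)) * 2
      = (∑ i, ∑ j, (W i j * x i ^ 2 - 2 * (W i j * x i * x j))) + ∑ i, ∑ j, W i j * x j ^ 2 := by
    rw [swap]
    simp only [Finset.sum_mul, ← Finset.sum_add_distrib]
    exact Finset.sum_congr rfl fun i _ => Finset.sum_congr rfl fun j _ => by ring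
  rw [this]
  simp only [← Finset.sum_add_distrib]
  exact Finset.sum_congr rfl fun i _ => Finset.sum_congr rfl fun j _ => by ring
variable {N : ℕ} (W : Matrix (Fin N) (Fin N) ℝ) (G : SimpleGraph (Fin N))

private lemma fiedler_herm {W : Matrix (Fin N) (Fin N) ℝ} (hsymm : ∀ i j, W i j = W j i) :
    (Matrix.diagonal (fun i => ∑ j, W i j) - W).IsHermitian := by
  refine Matrix.IsHermitian.sub (Matrix.isHermitian_diagonal _) ?_
  ext i j
  simp [conjTranspose_apply, hsymm i j]

private lemma fiedler_ker {W : Matrix (Fin N) (Fin N) ℝ} {G : SimpleGraph (Fin N)} (hsymm : ∀ i j, W i j = W j i) (hnonneg : ∀ i j, 0 ≤ W i j)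
    (hAdj : ∀ i j, G.Adj i j ↔ i ≠ j ∧ 0 < W i j) (hconn : G.Connected)
    (x : Fin N → ℝ) (hx : (Matrix.diagonal (fun i => ∑ j, W i j) - W) *ᵥ x = 0)
    (i j : Fin N) : x i = x j := by
  have hq : (∑ i, ∑ j, W i j * (x i - x j)^2) / 2 = 0 := by
    rw [← fiedler_quad W hsymm x, hx]; simp
  have hterm : ∀ a b : Fin N, W a b * (x a - x b)^2 = 0 := by
    have h0 : ∑ i, ∑ j, W i j * (x i - x j)^2 = 0 := by linarith
    intro a b
    have h1 := (Finset.sum_eq_zero_iff_of_nonneg (fun i _ =>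
      Finset.sum_nonneg fun j _ => mul_nonneg (hnonneg i j) (sq_nonneg _))).1 h0 a (Finset.mem_univ a)
    exact (Finset.sum_eq_zero_iff_of_nonneg (fun j _ =>
      mul_nonneg (hnonneg a j) (sq_nonneg _))).1 h1 b (Finset.mem_univ b)
  -- constant along edges, hence along walks
  have : j ∈ {k : Fin N | x k = x i} := by
    refine fiedler_closed G _ ?_ (hconn.preconnected i j) rfl
    intro a ha b hab
    have hw : 0 < W a b := ((hAdj a b).1 hab).2
    have := hterm a b
    have : (x a - x b)^2 = 0 := by
      rcases mul_eq_zero.1 this with h | h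
      · exact absurd h (ne_of_gt hw)
      · exact h
    have : x a = x b := by nlinarith [sq_nonneg (x a - x b)]
    simp only [Set.mem_setOf_eq] at ha ⊢
    rw [← this, ha]
  simpa using this.symm

private lemma fiedler_spectral {W : Matrix (Fin N) (Fin N) ℝ} {G : SimpleGraph (Fin N)}
    (hsymm : ∀ i j, W i j = W j i) (hnonneg : ∀ i j, 0 ≤ W i j)
    (hAdj : ∀ i j, G.Adj i j ↔ i ≠ j ∧ 0 < W i j) (hconn : G.Connected)
    {lam : ℝ}
    (hmin : ∀ μ : ℝ,
      (∃ x : Fin N → ℝ, x ≠ 0 ∧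
        (Matrix.diagonal (fun i => ∑ j, W i j) - W).mulVec x = μ • x) →
      μ = 0 ∨ lam ≤ μ)
    (z : Fin N → ℝ) (hz0 : ∑ i, z i = 0) :
    lam * (∑ i, z i ^ 2) ≤ z ⬝ᵥ ((Matrix.diagonal (fun i => ∑ j, W i j) - W) *ᵥ z)
    ∧ (z ⬝ᵥ ((Matrix.diagonal (fun i => ∑ j, W i j) - W) *ᵥ z) = lam * (∑ i, z i ^ 2) →
        (Matrix.diagonal (fun i => ∑ j, W i j) - W) *ᵥ z = lam • z) := by
  set L := Matrix.diagonal (fun i => ∑ j, W i j) - W with hLdef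
  have hH : L.IsHermitian := fiedler_herm hsymm
  have z' : EuclideanSpace ℝ (Fin N) := WithLp.toLp 2 z
  have hsymL : ∀ (x y : Fin N → ℝ), x ⬝ᵥ (L *ᵥ y) = (L *ᵥ x) ⬝ᵥ y := by
    intro x y
    rw [Matrix.dotProduct_mulVec]
    congr 1
    have hLt : Lᵀ = L := by
      have h := hH
      rwa [Matrix.IsHermitian, conjTranspose_eq_transpose_of_trivial] at h
    rw [← Matrix.mulVec_transpose, hLt]
  have hinner_dot : ∀ (x y : EuclideanSpace ℝ (Fin N)),
      ⟪x, y⟫ = (x : Fin N → ℝ) ⬝ᵥ (y : Fin N → ℝ) := by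
    intro x y
    simp [PiLp.inner_apply, RCLike.inner_apply, dotProduct, mul_comm]
  have hcase : ∀ k, lam ≤ hH.eigenvalues k ∨
      (hH.eigenvalues k = 0 ∧ ⟪hH.eigenvectorBasis k, (WithLp.toLp 2 z : EuclideanSpace ℝ (Fin N))⟫ = 0) := by
    intro k
    have heig := hH.mulVec_eigenvectorBasis k
    have hvnorm : ‖hH.eigenvectorBasis k‖ = 1 := hH.eigenvectorBasis.orthonormal.1 k
    have hvne : (⇑(hH.eigenvectorBasis k) : Fin N → ℝ) ≠ 0 := by
      intro h0
      have h1 : hH.eigenvectorBasis k = 0 := by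
        apply (WithLp.equiv 2 (Fin N → ℝ)).injective
        simpa using h0
      rw [h1, norm_zero] at hvnorm; norm_num at hvnorm
    rcases hmin (hH.eigenvalues k) ⟨⇑(hH.eigenvectorBasis k), hvne, heig⟩ with h0 | h
    · right
      refine ⟨h0, ?_⟩
      have hker : L *ᵥ ⇑(hH.eigenvectorBasis k) = 0 := by rw [heig, h0, zero_smul]
      have hconst := fiedler_ker hsymm hnonneg hAdj hconn _ hker
      obtain ⟨i₀⟩ : Nonempty (Fin N) := hconn.nonempty
      have hval : ⟪hH.eigenvectorBasis k, (WithLp.toLp 2 z : EuclideanSpace ℝ (Fin N))⟫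
          = hH.eigenvectorBasis k i₀ * ∑ i, z i := by
        simp only [PiLp.inner_apply, RCLike.inner_apply, conj_trivial]
        rw [Finset.mul_sum]
        refine Finset.sum_congr rfl fun i _ => ?_
        have h2 : hH.eigenvectorBasis k i = hH.eigenvectorBasis k i₀ := hconst i i₀
        rw [h2, mul_comm]
      rw [hval, hz0, mul_zero]
    · left; exact h
  have hrep : ∑ k, ⟪hH.eigenvectorBasis k, (WithLp.toLp 2 z : EuclideanSpace ℝ (Fin N))⟫ • hH.eigenvectorBasis k
      = (WithLp.toLp 2 z : EuclideanSpace ℝ (Fin N)) := hH.eigenvectorBasis.sum_repr' (WithLp.toLp 2 z)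
  have hck : ∀ k, ⟪hH.eigenvectorBasis k, (WithLp.toLp 2 (L *ᵥ z) : EuclideanSpace ℝ (Fin N))⟫
      = hH.eigenvalues k * ⟪hH.eigenvectorBasis k, (WithLp.toLp 2 z : EuclideanSpace ℝ (Fin N))⟫ := by
    intro k
    rw [hinner_dot, hinner_dot]
    show (⇑(hH.eigenvectorBasis k) : Fin N → ℝ) ⬝ᵥ (L *ᵥ z) = _
    rw [hsymL, hH.mulVec_eigenvectorBasis k, smul_dotProduct, smul_eq_mul]
  have hform : z ⬝ᵥ (L *ᵥ z) = ∑ k, hH.eigenvalues k *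
      ⟪hH.eigenvectorBasis k, (WithLp.toLp 2 z : EuclideanSpace ℝ (Fin N))⟫ ^ 2 := by
    have h1 := hH.eigenvectorBasis.sum_inner_mul_inner (WithLp.toLp 2 z : EuclideanSpace ℝ (Fin N))
      (WithLp.toLp 2 (L *ᵥ z) : EuclideanSpace ℝ (Fin N))
    have h2 := (hinner_dot (WithLp.toLp 2 z) (WithLp.toLp 2 (L *ᵥ z))).symm
    rw [h2, ← h1]
    refine Finset.sum_congr rfl fun k _ => ?_
    rw [hck k, real_inner_comm]; ring
  have hnorm : ∑ i, z i ^ 2 = ∑ k, ⟪hH.eigenvectorBasis k, (WithLp.toLp 2 z : EuclideanSpace ℝ (Fin N))⟫ ^ 2 := by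
    have h1 := hH.eigenvectorBasis.sum_inner_mul_inner (WithLp.toLp 2 z : EuclideanSpace ℝ (Fin N))
      (WithLp.toLp 2 z : EuclideanSpace ℝ (Fin N))
    have h2 := (hinner_dot (WithLp.toLp 2 z) (WithLp.toLp 2 z)).symm
    have h3 : ∑ i, z i ^ 2 = z ⬝ᵥ z := by simp [dotProduct, sq]
    rw [h3, h2, ← h1]
    refine Finset.sum_congr rfl fun k _ => ?_
    rw [real_inner_comm]; ring
  have hterm_nonneg : ∀ k, 0 ≤ (hH.eigenvalues k - lam) *
      ⟪hH.eigenvectorBasis k, (WithLp.toLp 2 z : EuclideanSpace ℝ (Fin N))⟫ ^ 2 := by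
    intro k
    rcases hcase k with h | ⟨h0, hc0⟩
    · exact mul_nonneg (by linarith) (sq_nonneg _)
    · rw [hc0]; ring_nf; simp
  have hdiff : z ⬝ᵥ (L *ᵥ z) - lam * (∑ i, z i ^ 2) = ∑ k, (hH.eigenvalues k - lam) *
      ⟪hH.eigenvectorBasis k, (WithLp.toLp 2 z : EuclideanSpace ℝ (Fin N))⟫ ^ 2 := by
    rw [hform, hnorm, Finset.mul_sum, ← Finset.sum_sub_distrib]
    exact Finset.sum_congr rfl fun k _ => by ring
  constructor
  · nlinarith [Finset.sum_nonneg fun k (_ : k ∈ Finset.univ) => hterm_nonneg k, hdiff]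
  · intro heq
    have hzero : ∑ k, (hH.eigenvalues k - lam) *
        ⟪hH.eigenvectorBasis k, (WithLp.toLp 2 z : EuclideanSpace ℝ (Fin N))⟫ ^ 2 = 0 := by
      rw [← hdiff, heq]; ring
    have hterm0 := (Finset.sum_eq_zero_iff_of_nonneg fun k _ => hterm_nonneg k).1 hzero
    have hmc : ∀ k, hH.eigenvalues k * ⟪hH.eigenvectorBasis k, (WithLp.toLp 2 z : EuclideanSpace ℝ (Fin N))⟫
        = lam * ⟪hH.eigenvectorBasis k, (WithLp.toLp 2 z : EuclideanSpace ℝ (Fin N))⟫ := by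
      intro k
      rcases mul_eq_zero.1 (hterm0 k (Finset.mem_univ k)) with h | h
      · have : hH.eigenvalues k = lam := by linarith
        rw [this]
      · rw [sq_eq_zero_iff.1 h, mul_zero, mul_zero]
    have hLz : (WithLp.toLp 2 (L *ᵥ z) : EuclideanSpace ℝ (Fin N)) = ∑ k,
        (hH.eigenvalues k * ⟪hH.eigenvectorBasis k, (WithLp.toLp 2 z : EuclideanSpace ℝ (Fin N))⟫) •
          hH.eigenvectorBasis k := by
      rw [← hH.eigenvectorBasis.sum_repr' (WithLp.toLp 2 (L *ᵥ z) : EuclideanSpace ℝ (Fin N))]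
      exact Finset.sum_congr rfl fun k _ => by rw [hck k]
    have hfin : (WithLp.toLp 2 (L *ᵥ z) : EuclideanSpace ℝ (Fin N)) = lam • (WithLp.toLp 2 z : EuclideanSpace ℝ (Fin N)) :=
      calc (WithLp.toLp 2 (L *ᵥ z) : EuclideanSpace ℝ (Fin N)) = ∑ k,
            (hH.eigenvalues k * ⟪hH.eigenvectorBasis k, (WithLp.toLp 2 z : EuclideanSpace ℝ (Fin N))⟫) •
              hH.eigenvectorBasis k := hLz
        _ = ∑ k, lam • (⟪hH.eigenvectorBasis k, (WithLp.toLp 2 z : EuclideanSpace ℝ (Fin N))⟫ •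
              hH.eigenvectorBasis k) :=
            Finset.sum_congr rfl fun k _ => by rw [hmc k, ← smul_smul]
        _ = lam • ∑ k, ⟪hH.eigenvectorBasis k, (WithLp.toLp 2 z : EuclideanSpace ℝ (Fin N))⟫ •
              hH.eigenvectorBasis k := (Finset.smul_sum).symm
        _ = lam • (WithLp.toLp 2 z : EuclideanSpace ℝ (Fin N)) := by rw [hrep]
    exact congrArg WithLp.ofLp hfin

/-- Fiedler: for a connected weighted graph `G` with Fiedler
vector `φ` (an eigenvector of the unnormalized Laplacian `L = D − W` for the
smallest nonzero eigenvalue `λ₁ > 0`), the subgraph induced on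
`V₁ = {i : 0 ≤ φ i}` is connected. -/
theorem fiedler_nonneg_part_connected
    {N : ℕ} (W : Matrix (Fin N) (Fin N) ℝ)
    (hsymm : ∀ i j, W i j = W j i)
    (hnonneg : ∀ i j, 0 ≤ W i j)
    (hdiag : ∀ i, W i i = 0)
    (G : SimpleGraph (Fin N))
    (hAdj : ∀ i j, G.Adj i j ↔ i ≠ j ∧ 0 < W i j)
    (hconn : G.Connected)
    (φ : Fin N → ℝ) (lam : ℝ)
    (hlam_pos : 0 < lam)
    (hphi : φ ≠ 0)
    (heig : (Matrix.diagonal (fun i => ∑ j, W i j) - W).mulVec φ = lam • φ)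
    (hmin : ∀ μ : ℝ,
      (∃ x : Fin N → ℝ, x ≠ 0 ∧
        (Matrix.diagonal (fun i => ∑ j, W i j) - W).mulVec x = μ • x) →
      μ = 0 ∨ lam ≤ μ) :
    (G.induce {i : Fin N | 0 ≤ φ i}).Connected := by
  classical
  set L := Matrix.diagonal (fun i => ∑ j, W i j) - W with hLdef
  set S : Set (Fin N) := {i : Fin N | 0 ≤ φ i} with hSdef
  have hmemS : ∀ i, i ∈ S ↔ 0 ≤ φ i := fun i => Iff.rfl
  obtain ⟨i0⟩ : Nonempty (Fin N) := hconn.nonempty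
  -- sum of φ is zero
  have hsum0 : ∑ i, φ i = 0 := by
    have h1 : ∑ i, ∑ j, (W i j * φ i - W i j * φ j) = ∑ i, lam * φ i :=
      Finset.sum_congr rfl fun i _ => fiedler_rowsum heig i
    have h2 : ∑ i, ∑ j, (W i j * φ i - W i j * φ j) = 0 := by
      simp only [Finset.sum_sub_distrib]
      have : ∑ i, ∑ j, W i j * φ j = ∑ i, ∑ j, W i j * φ i := by
        rw [Finset.sum_comm]
        exact Finset.sum_congr rfl fun i _ => Finset.sum_congr rfl fun j _ => by rw [hsymm]
      rw [this]; ring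
    rw [h2] at h1
    have h3 : lam * ∑ i, φ i = 0 := by rw [Finset.mul_sum]; exact h1.symm
    rcases mul_eq_zero.1 h3 with h | h
    · exact absurd h (ne_of_gt hlam_pos)
    · exact h
  -- S is nonempty
  have hSne : ∃ p, 0 ≤ φ p := by
    by_contra h
    push_neg at h
    have : ∑ i, φ i < 0 := Finset.sum_neg (fun i _ => h i) ⟨i0, Finset.mem_univ i0⟩
    rw [hsum0] at this
    exact lt_irrefl 0 this
  obtain ⟨p, hp⟩ := hSne
  rw [SimpleGraph.connected_iff]
  refine ⟨?_, ⟨⟨p, hp⟩⟩⟩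
  intro u v
  by_contra hnr
  obtain ⟨u, huS⟩ := u
  obtain ⟨v, hvS⟩ := v
  -- the connected component of u within S
  set C : Set (Fin N) := {i | ∃ h : i ∈ S, (G.induce S).Reachable ⟨u, huS⟩ ⟨i, h⟩} with hCdef
  have hCS : ∀ i ∈ C, i ∈ S := fun i hi => hi.1
  have hCu : u ∈ C := ⟨huS, SimpleGraph.Reachable.refl _⟩
  have hvC : v ∉ C := by
    rintro ⟨h, hr⟩
    exact hnr hr
  -- C is closed under adjacency within S
  have hCclosedS : ∀ i ∈ C, ∀ j, G.Adj i j → 0 ≤ φ j → j ∈ C := by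
    rintro i ⟨hiS, hr⟩ j hadj hj
    have hjS : j ∈ S := hj
    refine ⟨hjS, hr.trans (SimpleGraph.Adj.reachable ?_)⟩
    exact hadj
  -- no edges between C and S \ C
  have hcross : ∀ i ∈ C, ∀ j, j ∈ S → j ∉ C → W i j = 0 := by
    intro i hi j hjS hjC
    by_contra hW
    have hWpos : 0 < W i j := lt_of_le_of_ne (hnonneg i j) (Ne.symm hW)
    have hij : i ≠ j := fun h' => hjC (h' ▸ hi)
    exact hjC (hCclosedS i hi j ((hAdj i j).2 ⟨hij, hWpos⟩) hjS)
  set D : Set (Fin N) := {j | j ∈ S ∧ j ∉ C} with hDdef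
  have hDclosedS : ∀ i ∈ D, ∀ j, G.Adj i j → 0 ≤ φ j → j ∈ D := by
    rintro i ⟨hiS, hiC⟩ j hadj hj
    refine ⟨hj, fun hjC => hiC ?_⟩
    exact hCclosedS j hjC i hadj.symm hiS
  -- apply the sector lemma to C and D
  obtain ⟨h1C, h2C, h3C, h4C⟩ := fiedler_sector hsymm hnonneg hAdj hconn heig C
    hCS hCclosedS ⟨u, hCu⟩ ⟨v, hvC⟩
  obtain ⟨h1D, h2D, h3D, h4D⟩ := fiedler_sector hsymm hnonneg hAdj hconn heig D
    (fun i hi => hi.1) hDclosedS ⟨v, hvS, hvC⟩ ⟨u, fun h => h.2 hCu⟩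
  set x : Fin N → ℝ := fun k => if k ∈ C then φ k else 0 with hxdef
  set y : Fin N → ℝ := fun k => if k ∈ D then φ k else 0 with hydef
  set a : ℝ := ∑ i, y i with hadef
  set b : ℝ := ∑ i, x i with hbdef
  have ha_pos : 0 < a := by
    obtain ⟨i1, hi1, hpos⟩ := h1D
    refine Finset.sum_pos' (fun i _ => ?_) ⟨i1, Finset.mem_univ i1, ?_⟩
    · by_cases h : i ∈ D
      · rw [hydef]; simp only [if_pos h]; exact h.1
      · rw [hydef]; simp only [if_neg h]; exact le_refl 0
    · rw [hydef]; simp only [if_pos hi1]; exact hpos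
  set z : Fin N → ℝ := fun i => a * x i - b * y i with hzdef
  have hz0 : ∑ i, z i = 0 := by
    rw [hzdef]
    simp only [Finset.sum_sub_distrib, ← Finset.mul_sum]
    rw [← hadef, ← hbdef]; ring
  -- disjoint supports
  have hdisj : ∀ i, x i * y i = 0 := by
    intro i
    by_cases h : i ∈ C
    · have : i ∉ D := fun hD => hD.2 h
      rw [hydef]; simp [this]
    · rw [hxdef]; simp [h]
  -- pointwise linearity of L on z
  have hLz_lin : ∀ i, (L *ᵥ z) i = a * (L *ᵥ x) i - b * (L *ᵥ y) i := by
    intro i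
    rw [hLdef]
    rw [fiedler_mulVec_apply, fiedler_mulVec_apply, fiedler_mulVec_apply]
    rw [Finset.mul_sum, Finset.mul_sum, ← Finset.sum_sub_distrib]
    refine Finset.sum_congr rfl fun j _ => ?_
    rw [hzdef]
    ring
  -- (L y) vanishes on C, (L x) vanishes on D
  have hLyC : ∀ i ∈ C, (L *ᵥ y) i = 0 := by
    intro i hi
    rw [hLdef, fiedler_mulVec_apply]
    refine Finset.sum_eq_zero fun j _ => ?_
    have hyi : y i = 0 := by rw [hydef]; simp only [if_neg (fun hD : i ∈ D => hD.2 hi)]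
    by_cases hj : j ∈ D
    · have hW : W i j = 0 := hcross i hi j hj.1 hj.2
      rw [hW, hyi]; ring
    · have hyj : y j = 0 := by rw [hydef]; simp only [if_neg hj]
      rw [hyi, hyj]; ring
  have hLxD : ∀ i ∈ D, (L *ᵥ x) i = 0 := by
    intro i hi
    rw [hLdef, fiedler_mulVec_apply]
    refine Finset.sum_eq_zero fun j _ => ?_
    have hxi : x i = 0 := by rw [hxdef]; simp only [if_neg hi.2]
    by_cases hj : j ∈ C
    · have hW : W i j = 0 := by rw [hsymm]; exact hcross j hj i hi.1 hi.2
      rw [hW, hxi]; ring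
    · have hxj : x j = 0 := by rw [hxdef]; simp only [if_neg hj]
      rw [hxi, hxj]; ring
  have hxLy : x ⬝ᵥ (L *ᵥ y) = 0 := by
    refine Finset.sum_eq_zero fun i _ => ?_
    by_cases hi : i ∈ C
    · rw [hLyC i hi, mul_zero]
    · have : x i = 0 := by rw [hxdef]; simp only [if_neg hi]
      rw [this, zero_mul]
  have hyLx : y ⬝ᵥ (L *ᵥ x) = 0 := by
    refine Finset.sum_eq_zero fun i _ => ?_
    by_cases hi : i ∈ D
    · rw [hLxD i hi, mul_zero]
    · have : y i = 0 := by rw [hydef]; simp only [if_neg hi]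
      rw [this, zero_mul]
  -- quadratic form of z
  have hzLz : z ⬝ᵥ (L *ᵥ z) = a^2 * (x ⬝ᵥ (L *ᵥ x)) + b^2 * (y ⬝ᵥ (L *ᵥ y)) := by
    have h1 : ∀ i, z i * (L *ᵥ z) i
        = a^2 * (x i * (L *ᵥ x) i) + b^2 * (y i * (L *ᵥ y) i)
          - a*b*(x i * (L *ᵥ y) i) - a*b*(y i * (L *ᵥ x) i) := by
      intro i
      rw [hLz_lin i, hzdef]
      ring
    calc z ⬝ᵥ (L *ᵥ z)
        = ∑ i, (a^2 * (x i * (L *ᵥ x) i) + b^2 * (y i * (L *ᵥ y) i)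
          - a*b*(x i * (L *ᵥ y) i) - a*b*(y i * (L *ᵥ x) i)) :=
          Finset.sum_congr rfl fun i _ => h1 i
      _ = a^2 * (x ⬝ᵥ (L *ᵥ x)) + b^2 * (y ⬝ᵥ (L *ᵥ y))
          - a*b*(x ⬝ᵥ (L *ᵥ y)) - a*b*(y ⬝ᵥ (L *ᵥ x)) := by
          simp only [Finset.sum_sub_distrib, Finset.sum_add_distrib, ← Finset.mul_sum]
          rfl
      _ = a^2 * (x ⬝ᵥ (L *ᵥ x)) + b^2 * (y ⬝ᵥ (L *ᵥ y)) := by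
          rw [hxLy, hyLx]; ring
  have hzsq : ∑ i, z i ^ 2 = a^2 * ∑ i, x i ^ 2 + b^2 * ∑ i, y i ^ 2 := by
    rw [Finset.mul_sum, Finset.mul_sum, ← Finset.sum_add_distrib]
    refine Finset.sum_congr rfl fun i _ => ?_
    have h := hdisj i
    rw [hzdef]
    simp only
    linear_combination (-2*a*b) * h
  -- upper bound on the Rayleigh quotient of z
  have hup : z ⬝ᵥ (L *ᵥ z) ≤ lam * ∑ i, z i ^ 2 := by
    rw [hzLz, hzsq]
    have ha2 : (0:ℝ) ≤ a^2 := sq_nonneg a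
    have hb2 : (0:ℝ) ≤ b^2 := sq_nonneg b
    nlinarith [h4C, h4D]
  -- lower bound from the spectral lemma, hence equality and eigenvector property
  have spec := fiedler_spectral hsymm hnonneg hAdj hconn hmin z hz0
  rw [← hLdef] at spec
  have heq : z ⬝ᵥ (L *ᵥ z) = lam * ∑ i, z i ^ 2 := le_antisymm hup spec.1
  have hEig : L *ᵥ z = lam • z := spec.2 heq
  -- conclude: C is closed under ALL adjacency, contradicting reachability of v
  have hGclosedC : ∀ i ∈ C, ∀ j, G.Adj i j → j ∈ C := by
    intro i hi j hadj
    have hEi : (L *ᵥ z) i = lam * z i := by rw [hEig]; simp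
    have hzi : z i = a * φ i := by
      have hyi : y i = 0 := by rw [hydef]; simp only [if_neg (fun hD : i ∈ D => hD.2 hi)]
      have hxi : x i = φ i := by rw [hxdef]; simp only [if_pos hi]
      rw [hzdef]; simp only; rw [hxi, hyi]; ring
    have hLxi : (L *ᵥ x) i = lam * φ i + ∑ k, W i k * (φ k - x k) := h3C i hi
    have hEi2 : a * (lam * φ i + ∑ k, W i k * (φ k - x k)) = lam * (a * φ i) := by
      rw [← hLxi, ← hzi, ← hEi, hLz_lin i, hLyC i hi]; ring
    have hs0 : ∑ k, W i k * (φ k - x k) = 0 := by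
      have : a * (∑ k, W i k * (φ k - x k)) = 0 := by linarith [hEi2]
      rcases mul_eq_zero.1 this with h | h
      · exact absurd h (ne_of_gt ha_pos)
      · exact h
    have heach := (Finset.sum_eq_zero_iff_of_nonpos (fun k _ => h2C i hi k)).1 hs0
    have hWpos : 0 < W i j := ((hAdj i j).1 hadj).2
    by_cases hj : j ∈ C
    · exact hj
    · have hxj : x j = 0 := by rw [hxdef]; simp only [if_neg hj]
      have h0 := heach j (Finset.mem_univ j)
      simp only [hxdef, if_neg hj, sub_zero] at h0
      have hφj : φ j = 0 := by
        rcases mul_eq_zero.1 h0 with h | h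
        · exact absurd h (ne_of_gt hWpos)
        · exact h
      exact hCclosedS i hi j hadj (le_of_eq hφj.symm)
  exact hvC (fiedler_closed G C hGclosedC (hconn.preconnected u v) hCu)
end

section
/- Let J(d) = Σ_i g(d_i) with g : ℝ → ℝ_{≥0}. For any orthogonal direct-sum decomposition of coefficient index sets, the cost is additive: J(d restricted to A ⊔ B) = J(d|_A) + J(d|_B); consequently, in the best-basis dynamic program, choosing at each node the cheaper of {parent cost, sum of children costs} yields the global minimum cost over all bases selectable from the binary dictionary tree. -/
/-- A binary dictionary tree: each node carries the cost of its own set of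
basis vectors. -/
inductive CTree where
  | leaf (c : ℝ)
  | node (c : ℝ) (l r : CTree)

namespace CTree

/-- The set of total costs of all bases selectable from the dictionary tree:
at each node, either keep the node's own basis, or combine independent choices
on its two children. (Selectable bases correspond to antichains cutting every
root-to-leaf path exactly once.) -/
def basisCosts : CTree → Set ℝ
  | .leaf c => {c}
  | .node c l r =>
      insert c {x : ℝ | ∃ y ∈ basisCosts l, ∃ z ∈ basisCosts r, x = y + z}

/-- The bottom-up dynamic program: `m(t) = min {c(t), m(left t) + m(right t)}`. -/
noncomputable def dpCost : CTree → ℝ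
  | .leaf c => c
  | .node c l r => min c (dpCost l + dpCost r)

/-- All node costs are nonnegative. -/
def NonnegCosts : CTree → Prop
  | .leaf c => 0 ≤ c
  | .node c l r => 0 ≤ c ∧ NonnegCosts l ∧ NonnegCosts r

end CTree

/-- the cost `J(d) = Σᵢ g(dᵢ)` with `g ≥ 0` is additive over
disjoint index sets, and consequently the bottom-up best-basis dynamic program,
which at each node keeps the cheaper of the parent cost and the sum of the
children's costs, attains the global minimum cost over all bases selectable
from the binary dictionary tree. -/
theorem best_basis_dynamic_program (g : ℝ → ℝ) (hg : ∀ x : ℝ, 0 ≤ g x) :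
    (∀ (ι : Type) [DecidableEq ι] (d : ι → ℝ) (A B : Finset ι),
      Disjoint A B →
        ∑ i ∈ A ∪ B, g (d i) = (∑ i ∈ A, g (d i)) + ∑ i ∈ B, g (d i)) ∧
    (∀ t : CTree, t.NonnegCosts → IsLeast t.basisCosts t.dpCost) := by
  constructor
  · intro ι _ d A B hAB
    exact Finset.sum_union hAB
  · intro t
    induction t with
    | leaf c =>
      intro h
      exact ⟨rfl, fun x hx => le_of_eq hx.symm⟩
    | node c l r ihl ihr =>
      rintro ⟨hc, hl, hr⟩
      obtain ⟨hml, hlb⟩ := ihl hl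
      obtain ⟨hmr, hrb⟩ := ihr hr
      constructor
      · simp only [CTree.basisCosts, CTree.dpCost]
        rcases le_total c (l.dpCost + r.dpCost) with h | h
        · left; exact min_eq_left h
        · right; exact ⟨_, hml, _, hmr, min_eq_right h⟩
      · rintro x (rfl | ⟨y, hy, z, hz, rfl⟩)
        · exact min_le_left _ _
        · exact le_trans (min_le_right _ _) (add_le_add (hlb hy) (hrb hz))
end
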